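/- Let $1\le q_1<q_2<\infty$. If $S\subset\mathbb{R}^d$ satisfies $\mathcal{H}_{\alpha,q_1}(S)<\infty$, then $\mathcal{H}_{\alpha,q_2}(S)=0$. Equivalently, if $\mathcal{H}_{\alpha,q_2}(S)>0$ then $\mathcal{H}_{\alpha,q_1}(S)=\infty$. -/

import Mathlib

open Set MeasureTheory ENNReal

noncomputable section

/-- Euclidean space `ℝ^d`. -/
abbrev Euc (d : ℕ) := EuclideanSpace ℝ (Fin d)

/-- The dyadic block `∑_{diam B_j ∈ [2^{-k-1}, 2^{-k})} (diam B_j)^α` of a covering. -/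
def dyadicBlock {d : ℕ} (α : ℝ) (B : ℕ → Set (Euc d)) (k : ℤ) : ℝ≥0∞ :=
  ∑' j : ℕ, (Set.Ico ((2 : ℝ≥0∞) ^ (-k - 1)) ((2 : ℝ≥0∞) ^ (-k))).indicator
    (fun t => t ^ α) (EMetric.diam (B j))

/-- The Netrusov--Hausdorff capacity `𝓗_{α,q}` for finite `q`:
`𝓗_{α,q}(F) = lim_{δ→0} inf { ∑_k (∑_{diam B_j ∈ Δ_k} (diam B_j)^α)^q :
F ⊆ ⋃ B_j, diam B_j < δ }`. -/
def NHfin (d : ℕ) (α q : ℝ) (F : Set (Euc d)) : ℝ≥0∞ :=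
  ⨆ (δ : ℝ≥0∞) (_ : 0 < δ),
    ⨅ (B : ℕ → Set (Euc d)) (_ : F ⊆ ⋃ j, B j) (_ : ∀ j, EMetric.diam (B j) < δ),
      ∑' k : ℤ, (dyadicBlock α B k) ^ q

/-- The Netrusov--Hausdorff capacity `𝓗_{α,∞}`, with the outer sum over dyadic scales
replaced by a supremum. -/
def NHinf (d : ℕ) (α : ℝ) (F : Set (Euc d)) : ℝ≥0∞ :=
  ⨆ (δ : ℝ≥0∞) (_ : 0 < δ),
    ⨅ (B : ℕ → Set (Euc d)) (_ : F ⊆ ⋃ j, B j) (_ : ∀ j, EMetric.diam (B j) < δ),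
      ⨆ k : ℤ, dyadicBlock α B k

namespace NHaux

variable {d : ℕ} {α q p : ℝ}

/-- total mass of a covering -/
def covMass (d : ℕ) (α q : ℝ) (B : ℕ → Set (Euc d)) : ℝ≥0∞ :=
  ∑' k : ℤ, (dyadicBlock α B k) ^ q

/-- the inner infimum at fineness `δ` -/
def NHI (d : ℕ) (α q : ℝ) (δ : ℝ≥0∞) (F : Set (Euc d)) : ℝ≥0∞ :=
  ⨅ (B : ℕ → Set (Euc d)) (_ : F ⊆ ⋃ j, B j) (_ : ∀ j, EMetric.diam (B j) < δ),
    covMass d α q B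

lemma NHfin_eq (F : Set (Euc d)) :
    NHfin d α q F = ⨆ (δ : ℝ≥0∞) (_ : 0 < δ), NHI d α q δ F := rfl

lemma NHI_le {δ : ℝ≥0∞} {F : Set (Euc d)} {B : ℕ → Set (Euc d)}
    (h1 : F ⊆ ⋃ j, B j) (h2 : ∀ j, EMetric.diam (B j) < δ) :
    NHI d α q δ F ≤ covMass d α q B :=
  le_trans (iInf_le _ B) (le_trans (iInf_le _ h1) (iInf_le _ h2))

lemma le_NHI {δ : ℝ≥0∞} {F : Set (Euc d)} {c : ℝ≥0∞}
    (h : ∀ B : ℕ → Set (Euc d), (F ⊆ ⋃ j, B j) → (∀ j, EMetric.diam (B j) < δ) →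
      c ≤ covMass d α q B) : c ≤ NHI d α q δ F :=
  le_iInf fun B => le_iInf fun h1 => le_iInf fun h2 => h B h1 h2

lemma exists_cover {δ : ℝ≥0∞} {F : Set (Euc d)} {c : ℝ≥0∞} (h : NHI d α q δ F < c) :
    ∃ B : ℕ → Set (Euc d), (F ⊆ ⋃ j, B j) ∧ (∀ j, EMetric.diam (B j) < δ) ∧
      covMass d α q B < c := by
  simp only [NHI, iInf_lt_iff] at h
  obtain ⟨B, h1, h2, h3⟩ := h
  exact ⟨B, h1, h2, h3⟩

lemma NHI_mono_set {δ : ℝ≥0∞} {E F : Set (Euc d)} (h : E ⊆ F) :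
    NHI d α q δ E ≤ NHI d α q δ F :=
  le_NHI fun B h1 h2 => NHI_le (h.trans h1) h2

lemma NHI_anti {δ₁ δ₂ : ℝ≥0∞} {F : Set (Euc d)} (h : δ₁ ≤ δ₂) :
    NHI d α q δ₂ F ≤ NHI d α q δ₁ F :=
  le_NHI fun B h1 h2 => NHI_le h1 fun j => lt_of_lt_of_le (h2 j) h

lemma NHI_le_NHfin {δ : ℝ≥0∞} {F : Set (Euc d)} (hδ : 0 < δ) :
    NHI d α q δ F ≤ NHfin d α q F := by
  rw [NHfin_eq]; exact le_iSup₂ (f := fun δ _ => NHI d α q δ F) δ hδ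

lemma NHfin_le_iff {F : Set (Euc d)} {c : ℝ≥0∞} :
    NHfin d α q F ≤ c ↔ ∀ δ : ℝ≥0∞, 0 < δ → NHI d α q δ F ≤ c := by
  rw [NHfin_eq]; exact iSup₂_le_iff

lemma NHfin_mono {E F : Set (Euc d)} (h : E ⊆ F) : NHfin d α q E ≤ NHfin d α q F := by
  rw [NHfin_le_iff]
  exact fun δ hδ => le_trans (NHI_mono_set h) (NHI_le_NHfin hδ)

lemma two_zpow_pos (k : ℤ) : (0 : ℝ≥0∞) < 2 ^ k :=
  ENNReal.zpow_pos two_ne_zero ENNReal.ofNat_ne_top k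

lemma zero_notMem_Ico (k : ℤ) :
    (0 : ℝ≥0∞) ∉ Set.Ico ((2 : ℝ≥0∞) ^ (-k - 1)) ((2 : ℝ≥0∞) ^ (-k)) := by
  intro h
  exact absurd h.1 (not_le.2 (two_zpow_pos _))

lemma NHfin_subsingleton (hq : 0 < q) {s : Set (Euc d)} (hs : s.Subsingleton) :
    NHfin d α q s = 0 := by
  refine le_antisymm (NHfin_le_iff.2 fun δ hδ => ?_) (zero_le)
  refine le_trans (NHI_le (B := fun _ => s) (Set.subset_iUnion (fun _ : ℕ => s) 0)
    (fun j => ?_)) ?_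
  · rw [(show EMetric.diam s = 0 from Metric.ediam_subsingleton hs)]; exact hδ
  · refine le_of_eq ?_
    have hblock : ∀ k : ℤ, dyadicBlock α (fun _ : ℕ => s) k = 0 := by
      intro k
      have : ∀ j : ℕ, (Set.Ico ((2 : ℝ≥0∞) ^ (-k - 1)) ((2 : ℝ≥0∞) ^ (-k))).indicator
          (fun t => t ^ α) (EMetric.diam s) = 0 := by
        intro j
        rw [(show EMetric.diam s = 0 from Metric.ediam_subsingleton hs)]
        exact Set.indicator_of_notMem (zero_notMem_Ico k) _
      simp only [dyadicBlock, (show EMetric.diam s = 0 from Metric.ediam_subsingleton hs)] at *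
      rw [ENNReal.summable.tsum_eq_zero_iff]
      intro j
      exact Set.indicator_of_notMem (zero_notMem_Ico k) _
    unfold covMass
    rw [ENNReal.summable.tsum_eq_zero_iff]
    intro k
    rw [hblock k, ENNReal.zero_rpow_of_pos hq]

end NHaux

section Bpart

namespace NHaux

variable {ι : Type*} [Countable ι] {p : ℝ}

/-- `∑ f^p ≤ (∑ f)^p` for `p ≥ 1`. -/
lemma tsum_rpow_le (hp : 1 ≤ p) (f : ι → ℝ≥0∞) :
    ∑' i, (f i) ^ p ≤ (∑' i, f i) ^ p := by
  have hp0 : 0 < p := lt_of_lt_of_le zero_lt_one hp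
  set T := ∑' i, f i with hT
  rcases eq_or_ne T 0 with h0 | h0
  · have : ∀ i, f i = 0 := by
      intro i
      exact le_antisymm (le_trans (ENNReal.le_tsum i) h0.le) (zero_le)
    simp only [this, ENNReal.zero_rpow_of_pos hp0, tsum_zero]
    exact zero_le
  rcases eq_or_ne T ∞ with htop | htop
  · rw [htop, ENNReal.top_rpow_of_pos hp0]; exact le_top
  have key : ∀ i, (f i) ^ p ≤ f i * T ^ (p - 1) := by
    intro i
    rcases eq_or_ne (f i) 0 with hfi | hfi
    · rw [hfi, ENNReal.zero_rpow_of_pos hp0, zero_mul]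
    · have hfile : f i ≤ T := ENNReal.le_tsum i
      have hfit : f i ≠ ∞ := fun h => htop (top_le_iff.1 (h ▸ hfile))
      calc (f i) ^ p = (f i) ^ (1 + (p - 1)) := by ring_nf
        _ = (f i) ^ (1:ℝ) * (f i) ^ (p - 1) := ENNReal.rpow_add 1 (p-1) hfi hfit
        _ ≤ f i * T ^ (p - 1) := by
            rw [ENNReal.rpow_one]
            exact mul_le_mul_right (ENNReal.rpow_le_rpow hfile (by linarith)) _
  calc ∑' i, (f i) ^ p ≤ ∑' i, f i * T ^ (p - 1) := ENNReal.tsum_le_tsum key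
    _ = T * T ^ (p - 1) := by rw [ENNReal.tsum_mul_right]
    _ = T ^ (1:ℝ) * T ^ (p - 1) := by rw [ENNReal.rpow_one]
    _ = T ^ p := by rw [← ENNReal.rpow_add 1 (p-1) h0 htop]; ring_nf

/-- binary Minkowski for `tsum` in `ℝ≥0∞` -/
lemma Lp_add_le_tsum' (hp : 1 ≤ p) (f g : ι → ℝ≥0∞) :
    (∑' i, (f i + g i) ^ p) ^ (1/p) ≤
      (∑' i, (f i) ^ p) ^ (1/p) + (∑' i, (g i) ^ p) ^ (1/p) := by
  have hp0 : 0 < p := lt_of_lt_of_le zero_lt_one hp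
  have h1p : 0 < 1/p := by positivity
  rw [ENNReal.tsum_eq_iSup_sum (f := fun i => (f i + g i) ^ p)]
  rw [show ∀ x : ℝ≥0∞, x ^ (1/p) = ENNReal.orderIsoRpow (1/p) h1p x from fun _ => rfl]
  rw [OrderIso.map_iSup]
  refine iSup_le fun s => ?_
  show (∑ i ∈ s, (f i + g i) ^ p) ^ (1/p) ≤ _
  refine le_trans (ENNReal.Lp_add_le s f g hp) ?_
  gcongr <;> exact ENNReal.sum_le_tsum s

/-- finite Minkowski for tsum: sum over `Finset.range N` of sequences -/
lemma Lp_sum_le_tsum (hp : 1 ≤ p) (t : ℕ → ι → ℝ≥0∞) (N : ℕ) :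
    (∑' k, (∑ n ∈ Finset.range N, t n k) ^ p) ^ (1/p) ≤
      ∑ n ∈ Finset.range N, (∑' k, (t n k) ^ p) ^ (1/p) := by
  have hp0 : 0 < p := lt_of_lt_of_le zero_lt_one hp
  induction N with
  | zero =>
      simp [ENNReal.zero_rpow_of_pos hp0, ENNReal.zero_rpow_of_pos (by positivity : (0:ℝ) < 1/p), hp0]
  | succ N ih =>
      have : ∀ k, ∑ n ∈ Finset.range (N+1), t n k
          = (∑ n ∈ Finset.range N, t n k) + t N k := by
        intro k; rw [Finset.sum_range_succ]
      simp only [this, Finset.sum_range_succ]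
      exact le_trans (Lp_add_le_tsum' hp _ _) (add_le_add_left ih _)

/-- monotone convergence for tsum over a countable type, `ℕ`-indexed -/
lemma tsum_iSup_nat {F : ℕ → ι → ℝ≥0∞} (hF : ∀ k, Monotone fun N => F N k) :
    ∑' k, ⨆ N, F N k = ⨆ N, ∑' k, F N k := by
  rw [ENNReal.tsum_eq_iSup_sum (f := fun k => ⨆ N, F N k)]
  have : ∀ s : Finset ι, ∑ k ∈ s, ⨆ N, F N k = ⨆ N, ∑ k ∈ s, F N k := by
    intro s
    exact ENNReal.finsetSum_iSup_of_monotone fun k => hF k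
  simp_rw [this]
  rw [iSup_comm]
  congr 1
  ext N
  exact (ENNReal.tsum_eq_iSup_sum (f := fun k => F N k)).symm

/-- countable Minkowski inequality in `ℝ≥0∞` -/
lemma Lp_tsum_le_tsum (hp : 1 ≤ p) (t : ℕ → ι → ℝ≥0∞) :
    (∑' k, (∑' n, t n k) ^ p) ^ (1/p) ≤ ∑' n, (∑' k, (t n k) ^ p) ^ (1/p) := by
  have hp0 : 0 < p := lt_of_lt_of_le zero_lt_one hp
  have h1p : 0 < 1/p := by positivity
  have hpoint : ∀ k, (∑' n, t n k) = ⨆ N, ∑ n ∈ Finset.range N, t n k := by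
    intro k; exact ENNReal.tsum_eq_iSup_nat
  have hmono : ∀ k, Monotone fun N => (∑ n ∈ Finset.range N, t n k) ^ p := by
    intro k
    intro a b hab
    exact ENNReal.rpow_le_rpow (Finset.sum_le_sum_of_subset (Finset.range_subset_range.2 hab)) hp0.le
  calc (∑' k, (∑' n, t n k) ^ p) ^ (1/p)
      = (∑' k, ⨆ N, (∑ n ∈ Finset.range N, t n k) ^ p) ^ (1/p) := by
        congr 1
        refine tsum_congr fun k => ?_
        rw [hpoint k]
        exact (ENNReal.orderIsoRpow p hp0).map_iSup _
    _ = (⨆ N, ∑' k, (∑ n ∈ Finset.range N, t n k) ^ p) ^ (1/p) := by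
        rw [tsum_iSup_nat hmono]
    _ = ⨆ N, (∑' k, (∑ n ∈ Finset.range N, t n k) ^ p) ^ (1/p) :=
        (ENNReal.orderIsoRpow (1/p) h1p).map_iSup _
    _ ≤ ∑' n, (∑' k, (t n k) ^ p) ^ (1/p) := by
        refine iSup_le fun N => le_trans (Lp_sum_le_tsum hp t N) ?_
        exact ENNReal.sum_le_tsum _

/-- for families with pointwise disjoint supports, the `ℓ^p` mass adds up -/
lemma tsum_rpow_of_disjoint (hp0 : 0 < p) (t : ℕ → ι → ℝ≥0∞)
    (h : ∀ k, ({n | t n k ≠ 0} : Set ℕ).Subsingleton) :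
    ∑' k, (∑' n, t n k) ^ p = ∑' n, ∑' k, (t n k) ^ p := by
  have hpoint : ∀ k, (∑' n, t n k) ^ p = ∑' n, (t n k) ^ p := by
    intro k
    by_cases hex : ∃ n, t n k ≠ 0
    · obtain ⟨n₀, hn₀⟩ := hex
      have hz : ∀ m, m ≠ n₀ → t m k = 0 := by
        intro m hm
        by_contra hmne
        exact hm (h k hmne hn₀)
      rw [tsum_eq_single n₀ hz, tsum_eq_single n₀ (fun m hm => by
        rw [hz m hm, ENNReal.zero_rpow_of_pos hp0])]
    · push_neg at hex
      simp only [hex, tsum_zero, ENNReal.zero_rpow_of_pos hp0]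
  simp_rw [hpoint]
  exact ENNReal.tsum_comm

end NHaux
end Bpart

namespace NHaux

variable {d : ℕ} {α q : ℝ}

lemma dyadicBlock_eq_zero_of_fine {B : ℕ → Set (Euc d)} {K k : ℤ}
    (hB : ∀ j, EMetric.diam (B j) < (2:ℝ≥0∞) ^ (-K)) (hk : k < K) :
    dyadicBlock α B k = 0 := by
  rw [dyadicBlock, ENNReal.summable.tsum_eq_zero_iff]
  intro j
  refine Set.indicator_of_notMem ?_ _
  rintro ⟨h1, -⟩
  have h3 : (2:ℝ≥0∞) ^ (-K) ≤ 2 ^ (-k-1) := ENNReal.zpow_le_of_le one_le_two (by omega)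
  exact absurd (lt_of_le_of_lt h1 (hB j)) (not_lt.2 h3)

lemma dyadicBlock_pair (C : ℕ → ℕ → Set (Euc d)) (e : ℕ ≃ ℕ × ℕ) (k : ℤ) :
    dyadicBlock α (fun j => C (e j).1 (e j).2) k = ∑' n, dyadicBlock α (C n) k := by
  unfold dyadicBlock
  have := Equiv.tsum_eq e (fun p : ℕ × ℕ =>
    (Set.Ico ((2 : ℝ≥0∞) ^ (-k - 1)) ((2 : ℝ≥0∞) ^ (-k))).indicator
      (fun t => t ^ α) (EMetric.diam (C p.1 p.2)))
  rw [this]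
  exact ENNReal.tsum_prod (f := fun n m => (Set.Ico ((2 : ℝ≥0∞) ^ (-k - 1))
    ((2 : ℝ≥0∞) ^ (-k))).indicator (fun t => t ^ α) (EMetric.diam (C n m)))

/-- Countable subadditivity of the Netrusov–Hausdorff capacity, `q ≥ 1`. -/
lemma NHfin_iUnion_le (hq : 1 ≤ q) (A : ℕ → Set (Euc d)) :
    NHfin d α q (⋃ n, A n) ≤ ∑' n, NHfin d α q (A n) := by
  have hq0 : 0 < q := lt_of_lt_of_le zero_lt_one hq
  set T := ∑' n, NHfin d α q (A n) with hT
  rcases eq_or_ne T ∞ with htop | htop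
  · rw [htop]; exact le_top
  rw [NHfin_le_iff]
  intro δ hδ
  -- main quantitative bound
  have key : ∀ ε : ℝ≥0∞, 0 < ε → ε ≠ ∞ →
      NHI d α q δ (⋃ n, A n) ≤ ((T + ε) ^ (1/q) + ε) ^ q := by
    intro ε hε hεt
    -- weights
    set w : ℕ → ℝ≥0∞ := fun n => ε * 2⁻¹ ^ (n+1) with hw
    have hw_pos : ∀ n, 0 < w n := by
      intro n
      refine ENNReal.mul_pos hε.ne' ?_
      exact pow_ne_zero _ (by norm_num : (2⁻¹ : ℝ≥0∞) ≠ 0)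
    have hw_ne_top : ∀ n, w n ≠ ∞ := by
      intro n
      refine ENNReal.mul_ne_top hεt ?_
      exact ENNReal.pow_ne_top (by norm_num : (2⁻¹ : ℝ≥0∞) ≠ ⊤)
    have hw_sum : ∑' n, w n ≤ ε := by
      rw [hw, ENNReal.tsum_mul_left]
      have : ∑' n : ℕ, (2⁻¹ : ℝ≥0∞) ^ (n+1) = 2⁻¹ * ∑' n : ℕ, 2⁻¹ ^ n := by
        rw [← ENNReal.tsum_mul_left]
        exact tsum_congr fun n => by rw [pow_succ, mul_comm]
      rw [this, ENNReal.tsum_geometric]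
      have : (1 - 2⁻¹ : ℝ≥0∞)⁻¹ = 2 := by
        rw [ENNReal.one_sub_inv_two]
        simp
      rw [this]
      have : (2⁻¹ : ℝ≥0∞) * 2 = 1 := ENNReal.inv_mul_cancel (by norm_num) (by norm_num)
      rw [this, mul_one]
    have hfinA : ∀ n, NHfin d α q (A n) ≠ ∞ := by
      intro n
      exact ne_top_of_le_ne_top htop (ENNReal.le_tsum n)
    -- step 1 : choose covers
    have stepC : ∀ (n : ℕ) (K : ℤ), ∃ C : ℕ → Set (Euc d),
        (A n ⊆ ⋃ j, C j) ∧ (∀ j, EMetric.diam (C j) < min δ ((2:ℝ≥0∞) ^ (-K))) ∧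
        covMass d α q C ≤ NHfin d α q (A n) + w n := by
      intro n K
      have hδ' : 0 < min δ ((2:ℝ≥0∞) ^ (-K)) := lt_min hδ (two_zpow_pos _)
      have h1 : NHI d α q (min δ ((2:ℝ≥0∞) ^ (-K))) (A n) < NHfin d α q (A n) + w n := by
        refine lt_of_le_of_lt (NHI_le_NHfin hδ') ?_
        exact ENNReal.lt_add_right (hfinA n) (hw_pos n).ne'
      obtain ⟨B, hB1, hB2, hB3⟩ := exists_cover h1
      exact ⟨B, hB1, hB2, hB3.le⟩
    choose FC hFC1 hFC2 hFC3 using stepC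
    -- step 2 : choose tail cutoffs
    have stepK : ∀ (n : ℕ) (K : ℤ), ∃ K' : ℤ, K < K' ∧
        ∑' k : ℤ, (if K' ≤ k then (dyadicBlock α (FC n K) k) ^ q else 0) ≤ (w n) ^ q := by
      intro n K
      set f : ℤ → ℝ≥0∞ := fun k => (dyadicBlock α (FC n K) k) ^ q with hf
      have hfsum : ∑' k, f k ≠ ∞ := by
        refine ne_top_of_le_ne_top ?_ (hFC3 n K)
        refine ENNReal.add_ne_top.2 ⟨hfinA n, hw_ne_top n⟩
      have htd := ENNReal.tendsto_tsum_compl_atTop_zero hfsum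
      have hpos : (0:ℝ≥0∞) < (w n) ^ q := ENNReal.rpow_pos (hw_pos n) (hw_ne_top n)
      obtain ⟨s, hs⟩ := (htd.eventually (gt_mem_nhds hpos)).exists
      set s' : Finset ℤ := insert (K+1) s with hs'
      have hne : s'.Nonempty := ⟨K+1, by simp [hs']⟩
      refine ⟨s'.max' hne + 1, ?_, ?_⟩
      · have : (K+1) ≤ s'.max' hne := Finset.le_max' _ _ (by simp [hs'])
        omega
      · have hsub : ∑' k : ℤ, Set.indicator {x : ℤ | x ∉ s} f k ≤ (w n) ^ q := by
          rw [← tsum_subtype]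
          exact hs.le
        refine le_trans (ENNReal.tsum_le_tsum fun k => ?_) hsub
        by_cases hk : s'.max' hne + 1 ≤ k
        · rw [if_pos hk]
          have hks : k ∉ s := by
            intro hmem
            have := Finset.le_max' s' k (by simp [hs', hmem])
            omega
          rw [Set.indicator_of_mem (show k ∈ {x : ℤ | x ∉ s} from hks) f]
        · rw [if_neg hk]
          exact zero_le
    choose FK hFK1 hFK2 using stepK
    -- starting scale
    obtain ⟨m₀, hm₀⟩ := ENNReal.exists_inv_two_pow_lt hδ.ne'
    have h2m : (2:ℝ≥0∞) ^ (-(m₀:ℤ)) < δ := by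
      refine lt_of_eq_of_lt ?_ hm₀
      rw [ENNReal.zpow_neg, zpow_natCast, ← ENNReal.inv_pow]
    -- the recursive sequence of cutoffs
    set Kse : ℕ → ℤ := fun n => Nat.rec (m₀ : ℤ) (fun m Km => FK m Km) n with hKse
    have hKse0 : Kse 0 = (m₀ : ℤ) := rfl
    have hKseS : ∀ n, Kse (n+1) = FK n (Kse n) := fun n => rfl
    have hKmono : StrictMono Kse := strictMono_nat_of_lt_succ fun n => by
      rw [hKseS n]; exact hFK1 n (Kse n)
    -- the covers
    set Cov : ℕ → ℕ → Set (Euc d) := fun n => FC n (Kse n) with hCov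
    have hcov1 : ∀ n, A n ⊆ ⋃ j, Cov n j := fun n => hFC1 n (Kse n)
    have hcov2 : ∀ n j, EMetric.diam (Cov n j) < min δ ((2:ℝ≥0∞) ^ (-(Kse n))) :=
      fun n j => hFC2 n (Kse n) j
    have hcov3 : ∀ n, covMass d α q (Cov n) ≤ NHfin d α q (A n) + w n :=
      fun n => hFC3 n (Kse n)
    have hcov4 : ∀ n, ∑' k : ℤ, (if Kse (n+1) ≤ k then (dyadicBlock α (Cov n) k) ^ q else 0)
        ≤ (w n) ^ q := fun n => (hKseS n) ▸ hFK2 n (Kse n)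
    -- block notation
    set a : ℕ → ℤ → ℝ≥0∞ := fun n k => dyadicBlock α (Cov n) k with ha
    have hsupp : ∀ n k, k < Kse n → a n k = 0 := by
      intro n k hk
      refine dyadicBlock_eq_zero_of_fine (fun j => ?_) hk
      exact lt_of_lt_of_le (hcov2 n j) (min_le_right _ _)
    -- combined cover
    set e : ℕ ≃ ℕ × ℕ := (Denumerable.eqv (ℕ × ℕ)).symm with he
    set D : ℕ → Set (Euc d) := fun j => Cov (e j).1 (e j).2 with hD
    have hDcov : (⋃ n, A n) ⊆ ⋃ j, D j := by
      intro x hx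
      obtain ⟨n, hn⟩ := Set.mem_iUnion.1 hx
      obtain ⟨m, hm⟩ := Set.mem_iUnion.1 (hcov1 n hn)
      refine Set.mem_iUnion.2 ⟨e.symm (n, m), ?_⟩
      have : e (e.symm (n, m)) = (n, m) := e.apply_symm_apply _
      simp only [hD, this]
      exact hm
    have hDfine : ∀ j, EMetric.diam (D j) < δ :=
      fun j => lt_of_lt_of_le (hcov2 _ _) (min_le_left _ _)
    refine le_trans (NHI_le hDcov hDfine) ?_
    -- head/tail decomposition
    set hd : ℕ → ℤ → ℝ≥0∞ := fun n k => if k < Kse (n+1) then a n k else 0 with hhd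
    set tl : ℕ → ℤ → ℝ≥0∞ := fun n k => if Kse (n+1) ≤ k then a n k else 0 with htl
    have hsplit : ∀ n k, a n k = hd n k + tl n k := by
      intro n k
      by_cases h : k < Kse (n+1)
      · simp [hhd, htl, h, not_le.2 h]
      · simp [hhd, htl, h, not_lt.1 h]
    have hblockD : ∀ k, dyadicBlock α D k = (∑' n, hd n k) + (∑' n, tl n k) := by
      intro k
      rw [hD, dyadicBlock_pair Cov e k]
      calc ∑' n, a n k = ∑' n, (hd n k + tl n k) := tsum_congr fun n => hsplit n k
        _ = _ := ENNReal.tsum_add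
    -- disjointness of heads
    have hdisj : ∀ k, ({n | hd n k ≠ 0} : Set ℕ).Subsingleton := by
      intro k n hn m hm
      by_contra hnm
      have hrange : ∀ l, hd l k ≠ 0 → Kse l ≤ k ∧ k < Kse (l+1) := by
        intro l hl
        constructor
        · by_contra hlt
          exact hl (by simp only [hhd]; rw [hsupp l k (not_le.1 hlt)]; simp)
        · by_contra hge
          exact hl (by simp only [hhd, if_neg hge])
      obtain ⟨hn1, hn2⟩ := hrange n hn
      obtain ⟨hm1, hm2⟩ := hrange m hm
      rcases lt_or_gt_of_ne hnm with h | h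
      · have : Kse (n+1) ≤ Kse m := hKmono.monotone (show n+1 ≤ m by omega)
        omega
      · have : Kse (m+1) ≤ Kse n := hKmono.monotone (show m+1 ≤ n by omega)
        omega
    -- the estimate
    have hmain : (covMass d α q D) ^ (1/q) ≤ (T + ε) ^ (1/q) + ε := by
      have e1 : covMass d α q D = ∑' k : ℤ, ((∑' n, hd n k) + (∑' n, tl n k)) ^ q := by
        unfold covMass
        exact tsum_congr fun k => by rw [hblockD k]
      rw [e1]
      refine le_trans (Lp_add_le_tsum' hq _ _) (add_le_add ?_ ?_)
      · -- heads
        have e2 : ∑' k : ℤ, (∑' n, hd n k) ^ q = ∑' n, ∑' k : ℤ, (hd n k) ^ q :=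
          tsum_rpow_of_disjoint hq0 hd hdisj
        rw [e2]
        refine ENNReal.rpow_le_rpow ?_ (by positivity)
        have hheadn : ∀ n, ∑' k : ℤ, (hd n k) ^ q ≤ NHfin d α q (A n) + w n := by
          intro n
          refine le_trans ?_ (hcov3 n)
          unfold covMass
          refine ENNReal.tsum_le_tsum fun k => ?_
          refine ENNReal.rpow_le_rpow ?_ hq0.le
          by_cases h : k < Kse (n+1)
          · simp [hhd, h, ha]
          · simp [hhd, h]
        calc ∑' n, ∑' k : ℤ, (hd n k) ^ q ≤ ∑' n, (NHfin d α q (A n) + w n) :=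
              ENNReal.tsum_le_tsum hheadn
          _ = T + ∑' n, w n := ENNReal.tsum_add
          _ ≤ T + ε := add_le_add le_rfl hw_sum
      · -- tails
        refine le_trans (Lp_tsum_le_tsum hq tl) ?_
        refine le_trans (ENNReal.tsum_le_tsum fun n => ?_) hw_sum
        show (∑' k : ℤ, (tl n k) ^ q) ^ (1/q) ≤ w n
        have : ∑' k : ℤ, (tl n k) ^ q ≤ (w n) ^ q := by
          refine le_trans (le_of_eq ?_) (hcov4 n)
          refine tsum_congr fun k => ?_
          by_cases h : Kse (n+1) ≤ k
          · simp [htl, h, ha]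
          · simp [htl, h, ENNReal.zero_rpow_of_pos hq0]
        refine le_trans (ENNReal.rpow_le_rpow this (by positivity)) ?_
        rw [← ENNReal.rpow_mul, mul_one_div_cancel hq0.ne', ENNReal.rpow_one]
    calc covMass d α q D = ((covMass d α q D) ^ (1/q)) ^ q := by
          rw [← ENNReal.rpow_mul, one_div_mul_cancel hq0.ne', ENNReal.rpow_one]
      _ ≤ ((T + ε) ^ (1/q) + ε) ^ q := ENNReal.rpow_le_rpow hmain hq0.le
  -- pass to the limit ε → 0
  have hseq : ∀ m : ℕ, NHI d α q δ (⋃ n, A n) ≤ ((T + 2⁻¹ ^ m) ^ (1/q) + 2⁻¹ ^ m) ^ q := by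
    intro m
    refine key (2⁻¹ ^ m) ?_ ?_
    · exact pos_iff_ne_zero.2 (pow_ne_zero _ (by norm_num))
    · exact pow_ne_top (by norm_num)
  have htend : Filter.Tendsto (fun m : ℕ => ((T + 2⁻¹ ^ m) ^ (1/q) + 2⁻¹ ^ m) ^ q)
      Filter.atTop (nhds T) := by
    have h0 : Filter.Tendsto (fun m : ℕ => (2⁻¹ : ℝ≥0∞) ^ m) Filter.atTop (nhds 0) :=
      ENNReal.tendsto_pow_atTop_nhds_zero_of_lt_one (ENNReal.inv_lt_one.2 one_lt_two)
    have h1 : Filter.Tendsto (fun m : ℕ => (T + 2⁻¹ ^ m) ^ (1/q) + 2⁻¹ ^ m)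
        Filter.atTop (nhds (T ^ (1/q))) := by
      have h2 : Filter.Tendsto (fun m : ℕ => T + (2⁻¹:ℝ≥0∞) ^ m) Filter.atTop (nhds T) := by
        have := Filter.Tendsto.add (tendsto_const_nhds (x := T)) h0
        simpa using this
      have h3 := (ENNReal.continuous_rpow_const (y := 1/q)).continuousAt.tendsto.comp h2
      have := Filter.Tendsto.add h3 h0
      simpa using this
    have := (ENNReal.continuous_rpow_const (y := q)).continuousAt.tendsto.comp h1
    have heq : (T ^ (1/q)) ^ q = T := by
      rw [← ENNReal.rpow_mul, one_div_mul_cancel hq0.ne', ENNReal.rpow_one]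
    rw [heq] at this
    exact this
  exact ge_of_tendsto' htend hseq

end NHaux

namespace NHaux

variable {d : ℕ} {α q q₁ q₂ : ℝ}

lemma NHfin_union_le (hq : 1 ≤ q) (A B : Set (Euc d)) :
    NHfin d α q (A ∪ B) ≤ NHfin d α q A + NHfin d α q B := by
  classical
  have hq0 : 0 < q := lt_of_lt_of_le zero_lt_one hq
  have h := NHfin_iUnion_le (α := α) hq (fun n => if n = 0 then A else if n = 1 then B else ∅)
  have hU : (⋃ n, if n = 0 then A else if n = 1 then B else (∅ : Set (Euc d))) = A ∪ B := by
    ext x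
    simp only [Set.mem_iUnion, Set.mem_union]
    constructor
    · rintro ⟨n, hn⟩
      split_ifs at hn with h1 h2
      · exact Or.inl hn
      · exact Or.inr hn
      · exact absurd hn (Set.notMem_empty x)
    · rintro (hx | hx)
      · exact ⟨0, by simp [hx]⟩
      · exact ⟨1, by simp [hx]⟩
  rw [hU] at h
  refine le_trans h (le_of_eq ?_)
  rw [tsum_eq_sum (s := ({0, 1} : Finset ℕ)) ?_]
  · rw [Finset.sum_pair (by norm_num : (0:ℕ) ≠ 1)]
    norm_num
  · intro n hn
    have h0 : n ≠ 0 := by intro h; exact hn (by simp [h])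
    have h1 : n ≠ 1 := by intro h; exact hn (by simp [h])
    simp only [h0, h1, if_false]
    exact NHfin_subsingleton hq0 Set.subsingleton_empty

lemma NHI_union_sep (hq : 1 ≤ q) {A B : Set (Euc d)} {r δ : ℝ≥0∞}
    (hr : r ≠ 0) (hsep : ∀ x ∈ A, ∀ y ∈ B, r ≤ edist x y) (hδr : δ ≤ r) :
    NHI d α q δ A + NHI d α q δ B ≤ NHI d α q δ (A ∪ B) := by
  classical
  refine le_NHI fun C hC1 hC2 => ?_
  set CA : ℕ → Set (Euc d) := fun j => if (C j ∩ A).Nonempty then C j else ∅ with hCA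
  set CB : ℕ → Set (Euc d) := fun j => if (C j ∩ A).Nonempty then ∅ else C j with hCB
  have hCAcov : A ⊆ ⋃ j, CA j := by
    intro x hx
    obtain ⟨j, hj⟩ := Set.mem_iUnion.1 (hC1 (Set.mem_union_left _ hx))
    refine Set.mem_iUnion.2 ⟨j, ?_⟩
    have : (C j ∩ A).Nonempty := ⟨x, hj, hx⟩
    simp [hCA, this, hj]
  have hCBcov : B ⊆ ⋃ j, CB j := by
    intro x hx
    obtain ⟨j, hj⟩ := Set.mem_iUnion.1 (hC1 (Set.mem_union_right _ hx))
    refine Set.mem_iUnion.2 ⟨j, ?_⟩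
    have hne : ¬(C j ∩ A).Nonempty := by
      rintro ⟨y, hyC, hyA⟩
      have h1 : r ≤ edist y x := hsep y hyA x hx
      have h2 : edist y x ≤ EMetric.diam (C j) := EMetric.edist_le_diam_of_mem hyC hj
      exact absurd (lt_of_le_of_lt (h1.trans h2) (hC2 j)) (not_lt.2 hδr)
    simp [hCB, hne, hj]
  have hCAfine : ∀ j, EMetric.diam (CA j) < δ := by
    intro j
    by_cases h : (C j ∩ A).Nonempty
    · simpa [hCA, h] using hC2 j
    · simp only [hCA, h, if_false]
      rw [(show EMetric.diam (∅ : Set (Euc d)) = 0 from Metric.ediam_empty)]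
      exact lt_of_le_of_lt (zero_le) (hC2 0)
  have hCBfine : ∀ j, EMetric.diam (CB j) < δ := by
    intro j
    by_cases h : (C j ∩ A).Nonempty
    · simp only [hCB, h, if_true]
      rw [(show EMetric.diam (∅ : Set (Euc d)) = 0 from Metric.ediam_empty)]
      exact lt_of_le_of_lt (zero_le) (hC2 j)
    · simpa [hCB, h] using hC2 j
  have hblk : ∀ k, dyadicBlock α C k = dyadicBlock α CA k + dyadicBlock α CB k := by
    intro k
    unfold dyadicBlock
    rw [← ENNReal.tsum_add]
    refine tsum_congr fun j => ?_
    by_cases h : (C j ∩ A).Nonempty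
    · simp only [hCA, hCB, h, if_true, if_false]
      rw [(show EMetric.diam (∅ : Set (Euc d)) = 0 from Metric.ediam_empty), Set.indicator_of_notMem (zero_notMem_Ico k), add_zero]
    · simp only [hCA, hCB, h, if_true, if_false]
      rw [(show EMetric.diam (∅ : Set (Euc d)) = 0 from Metric.ediam_empty), Set.indicator_of_notMem (zero_notMem_Ico k), zero_add]
  have hmass : covMass d α q CA + covMass d α q CB ≤ covMass d α q C := by
    unfold covMass
    rw [← ENNReal.tsum_add]
    refine ENNReal.tsum_le_tsum fun k => ?_
    rw [hblk k]
    exact ENNReal.add_rpow_le_rpow_add _ _ hq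
  exact le_trans (add_le_add (NHI_le hCAcov hCAfine) (NHI_le hCBcov hCBfine)) hmass

lemma NHfin_union_sep (hq : 1 ≤ q) {A B : Set (Euc d)}
    (hAB : Metric.AreSeparated A B) :
    NHfin d α q (A ∪ B) = NHfin d α q A + NHfin d α q B := by
  obtain ⟨r, hr, hsep⟩ := hAB
  refine le_antisymm (NHfin_union_le hq A B) ?_
  rw [NHfin_eq A, NHfin_eq B]
  refine ENNReal.iSup_add_iSup_le fun δ₁ δ₂ => ?_
  by_cases h₁ : 0 < δ₁
  case neg =>
    rw [iSup_neg h₁, bot_eq_zero, zero_add]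
    by_cases h₂ : 0 < δ₂
    · rw [iSup_pos h₂]
      exact le_trans (NHI_mono_set Set.subset_union_right) (NHI_le_NHfin h₂)
    · rw [iSup_neg h₂, bot_eq_zero]
      exact zero_le
  case pos =>
    by_cases h₂ : 0 < δ₂
    case neg =>
      rw [iSup_neg h₂, bot_eq_zero, add_zero, iSup_pos h₁]
      exact le_trans (NHI_mono_set Set.subset_union_left) (NHI_le_NHfin h₁)
    case pos =>
      simp only [iSup_pos h₁, iSup_pos h₂]
      set δ := min δ₁ (min δ₂ r) with hδ
      have hδpos : 0 < δ := lt_min h₁ (lt_min h₂ (pos_iff_ne_zero.2 hr))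
      calc NHI d α q δ₁ A + NHI d α q δ₂ B
          ≤ NHI d α q δ A + NHI d α q δ B :=
            add_le_add (NHI_anti (min_le_left _ _))
              (NHI_anti ((min_le_right _ _).trans (min_le_left _ _)))
        _ ≤ NHI d α q δ (A ∪ B) :=
            NHI_union_sep hq hr hsep ((min_le_right _ _).trans (min_le_right _ _))
        _ ≤ NHfin d α q (A ∪ B) := NHI_le_NHfin hδpos

/-- comparison of exponents on single sets -/
lemma NHfin_le_rpow_NHfin {E : Set (Euc d)} (hq1 : 0 < q₁) (h12 : q₁ ≤ q₂) :
    NHfin d α q₂ E ≤ (NHfin d α q₁ E) ^ (q₂ / q₁) := by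
  set p := q₂ / q₁ with hp
  have hp1 : 1 ≤ p := (one_le_div hq1).2 h12
  have hp0 : 0 < p := lt_of_lt_of_le zero_lt_one hp1
  rw [NHfin_le_iff]
  intro δ hδ
  -- pointwise per-cover comparison
  have hcov : ∀ C : ℕ → Set (Euc d), covMass d α q₂ C ≤ (covMass d α q₁ C) ^ p := by
    intro C
    unfold covMass
    have : ∀ k : ℤ, (dyadicBlock α C k) ^ q₂ = ((dyadicBlock α C k) ^ q₁) ^ p := by
      intro k
      rw [← ENNReal.rpow_mul]
      congr 1
      rw [hp]; field_simp [hq1.ne']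
    calc ∑' k : ℤ, (dyadicBlock α C k) ^ q₂
        = ∑' k : ℤ, ((dyadicBlock α C k) ^ q₁) ^ p := tsum_congr this
      _ ≤ (∑' k : ℤ, (dyadicBlock α C k) ^ q₁) ^ p := tsum_rpow_le hp1 _
  have hNH : NHI d α q₂ δ E ≤ (NHI d α q₁ δ E) ^ p := by
    rcases eq_or_ne (NHI d α q₁ δ E) ∞ with htop | htop
    · rw [htop, ENNReal.top_rpow_of_pos hp0]
      exact le_top
    have hseq : ∀ m : ℕ, NHI d α q₂ δ E ≤ (NHI d α q₁ δ E + 2⁻¹ ^ m) ^ p := by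
      intro m
      have hlt : NHI d α q₁ δ E < NHI d α q₁ δ E + 2⁻¹ ^ m :=
        ENNReal.lt_add_right htop (pow_ne_zero _ (by norm_num : (2⁻¹:ℝ≥0∞) ≠ 0))
      obtain ⟨C, hC1, hC2, hC3⟩ := exists_cover hlt
      exact le_trans (NHI_le hC1 hC2)
        (le_trans (hcov C) (ENNReal.rpow_le_rpow hC3.le hp0.le))
    have h0 : Filter.Tendsto (fun m : ℕ => (2⁻¹ : ℝ≥0∞) ^ m) Filter.atTop (nhds 0) :=
      ENNReal.tendsto_pow_atTop_nhds_zero_of_lt_one (ENNReal.inv_lt_one.2 one_lt_two)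
    have h1 : Filter.Tendsto (fun m : ℕ => (NHI d α q₁ δ E + 2⁻¹ ^ m) ^ p)
        Filter.atTop (nhds ((NHI d α q₁ δ E) ^ p)) := by
      have h2 : Filter.Tendsto (fun m : ℕ => NHI d α q₁ δ E + (2⁻¹:ℝ≥0∞) ^ m)
          Filter.atTop (nhds (NHI d α q₁ δ E)) := by
        have := Filter.Tendsto.add (tendsto_const_nhds (x := NHI d α q₁ δ E)) h0
        simpa using this
      exact (ENNReal.continuous_rpow_const (y := p)).continuousAt.tendsto.comp h2
    exact ge_of_tendsto' h1 hseq
  exact le_trans hNH (ENNReal.rpow_le_rpow (NHI_le_NHfin hδ) hp0.le)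

end NHaux

namespace NHaux

variable {d : ℕ} {α q : ℝ}

/-- The Netrusov–Hausdorff capacity as an outer measure, for `q ≥ 1`. -/
def NHom (d : ℕ) (α q : ℝ) (hq : 1 ≤ q) : OuterMeasure (Euc d) where
  measureOf := NHfin d α q
  empty := NHfin_subsingleton (lt_of_lt_of_le zero_lt_one hq) Set.subsingleton_empty
  mono := fun h => NHfin_mono h
  iUnion_nat := fun s _ => NHfin_iUnion_le hq s

lemma NHom_apply (hq : 1 ≤ q) (E : Set (Euc d)) : NHom d α q hq E = NHfin d α q E := rfl

lemma NHom_restrict_isMetric (hq : 1 ≤ q) (S : Set (Euc d)) :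
    (OuterMeasure.restrict S (NHom d α q hq)).IsMetric := by
  intro s t hst
  rw [OuterMeasure.restrict_apply, OuterMeasure.restrict_apply, OuterMeasure.restrict_apply]
  rw [NHom_apply, NHom_apply, NHom_apply, Set.union_inter_distrib_right]
  exact NHfin_union_sep hq
    (Metric.AreSeparated.mono Set.inter_subset_left Set.inter_subset_left hst)

/-- The Borel measure induced by the capacity restricted to `S`. -/
def NHmeas (d : ℕ) (α q : ℝ) (hq : 1 ≤ q) (S : Set (Euc d)) : Measure (Euc d) :=
  (OuterMeasure.restrict S (NHom d α q hq)).toMeasure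
    (le_trans (le_of_eq BorelSpace.measurable_eq)
      (NHom_restrict_isMetric hq S).borel_le_caratheodory)

lemma NHmeas_apply (hq : 1 ≤ q) (S : Set (Euc d)) {E : Set (Euc d)}
    (hE : MeasurableSet E) : NHmeas d α q hq S E = NHfin d α q (E ∩ S) := by
  rw [NHmeas, toMeasure_apply _ _ hE, OuterMeasure.restrict_apply, NHom_apply]

/-- centers used for the sphere-slicing argument -/
def cen (d : ℕ) : Fin (d+1) → Euc d :=
  Fin.cons 0 (fun j => EuclideanSpace.single j (1:ℝ))

/-- a point of `ℝ^d` is determined by its distances to the `d+1` points `cen d i` -/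
lemma eq_of_dist_cen {x y : Euc d}
    (h : ∀ i : Fin (d+1), dist x (cen d i) = dist y (cen d i)) : x = y := by
  have h0 : ‖x‖ = ‖y‖ := by
    have h1 := h 0
    rw [show cen d 0 = 0 from Fin.cons_zero _ _] at h1
    simpa [dist_zero_right] using h1
  have hcoord : ∀ j : Fin d, x j = y j := by
    intro j
    have hj := h j.succ
    rw [show cen d j.succ = EuclideanSpace.single j (1:ℝ) from Fin.cons_succ _ _ _] at hj
    set e : Euc d := EuclideanSpace.single j (1:ℝ) with he
    have hx : ‖x - e‖ = ‖y - e‖ := by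
      rw [← dist_eq_norm, ← dist_eq_norm]
      exact hj
    have hx2 : ‖x - e‖ ^ 2 = ‖x‖ ^ 2 - 2 * inner ℝ x e + ‖e‖ ^ 2 := norm_sub_sq_real x e
    have hy2 : ‖y - e‖ ^ 2 = ‖y‖ ^ 2 - 2 * inner ℝ y e + ‖e‖ ^ 2 := norm_sub_sq_real y e
    have hinner : (inner ℝ x e : ℝ) = inner ℝ y e := by
      rw [hx, hy2, h0] at hx2
      linarith
    have hxe : (inner ℝ x e : ℝ) = x j := by
      rw [he]
      simpa using EuclideanSpace.inner_single_right (𝕜 := ℝ) j (1:ℝ) x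
    have hye : (inner ℝ y e : ℝ) = y j := by
      rw [he]
      simpa using EuclideanSpace.inner_single_right (𝕜 := ℝ) j (1:ℝ) y
    rw [← hxe, ← hye, hinner]
  ext j
  exact hcoord j

lemma half_pow_antitone {a b : ℕ} (h : a ≤ b) : (2⁻¹ : ℝ≥0∞) ^ b ≤ 2⁻¹ ^ a := by
  induction b with
  | zero =>
      have : a = 0 := by omega
      simp [this]
  | succ b ih =>
      rcases Nat.lt_or_ge a (b+1) with h' | h'
      · have hab : a ≤ b := by omega
        calc (2⁻¹ : ℝ≥0∞) ^ (b+1) = 2⁻¹ ^ b * 2⁻¹ := pow_succ _ _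
          _ ≤ 2⁻¹ ^ b * 1 := mul_le_mul_right (by norm_num) _
          _ = 2⁻¹ ^ b := mul_one _
          _ ≤ 2⁻¹ ^ a := ih hab
      · have : a = b + 1 := by omega
        simp [this]

lemma half_pow_add_self (j : ℕ) :
    (2⁻¹ : ℝ≥0∞) ^ (j+1) + 2⁻¹ ^ (j+1) = 2⁻¹ ^ j := by
  have h1 : (2:ℝ≥0∞) * 2⁻¹ = 1 := ENNReal.mul_inv_cancel two_ne_zero ENNReal.ofNat_ne_top
  rw [← two_mul, pow_succ]
  calc (2:ℝ≥0∞) * (2⁻¹ ^ j * 2⁻¹) = 2⁻¹ ^ j * (2 * 2⁻¹) := by ring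
    _ = 2⁻¹ ^ j := by rw [h1, mul_one]

/-- The peeling lemma: from any set of measure `> ε·2⁻ʲ` subject to `j` sphere
constraints one can extract a piece of measure between `ε·2⁻ᵈ⁻²` and `ε`. -/
lemma exists_piece (μ : Measure (Euc d)) [IsFiniteMeasure μ] [NullSingletonClass μ]
    {ε : ℝ≥0∞} (hε0 : ε ≠ 0) (hεt : ε ≠ ∞) :
    ∀ (n : ℕ) (j : ℕ), j + n = d + 1 → ∀ s : Set (Euc d), MeasurableSet s →
      (∀ i : Fin (d+1), (i:ℕ) < j → ∃ R : ℝ, ∀ x ∈ s, dist x (cen d i) = R) →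
      ε * 2⁻¹ ^ j < μ s →
      ∃ t : Set (Euc d), t ⊆ s ∧ MeasurableSet t ∧ ε * 2⁻¹ ^ (d+2) ≤ μ t ∧ μ t ≤ ε := by
  intro n
  induction n with
  | zero =>
      intro j hj s hs hsph hμs
      exfalso
      have hsub : s.Subsingleton := by
        intro x hx y hy
        apply eq_of_dist_cen
        intro i
        obtain ⟨R, hR⟩ := hsph i (by omega)
        rw [hR x hx, hR y hy]
      have hz : μ s = 0 := hsub.measure_zero μ
      rw [hz] at hμs
      exact absurd hμs (not_lt.2 (zero_le))
  | succ n ih =>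
      intro j hj s hs hsph hμs
      have hjd : j ≤ d := by omega
      set c : Euc d := cen d ⟨j, by omega⟩ with hc
      set L : ℝ≥0∞ := ε * 2⁻¹ ^ (j+1) with hL
      have hL0 : L ≠ 0 := mul_ne_zero hε0 (pow_ne_zero _ (by norm_num))
      set g : ℝ → ℝ≥0∞ := fun r => μ (s ∩ Metric.closedBall c r) with hg
      have hgmono : Monotone g := by
        intro r₁ r₂ hr
        exact measure_mono
          (Set.inter_subset_inter_right _ (Metric.closedBall_subset_closedBall hr))
      set A : Set ℝ := {r : ℝ | L ≤ g r} with hA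
      have hAne : A.Nonempty := by
        have hU : s = ⋃ m : ℕ, (s ∩ Metric.closedBall c m) := by
          ext x
          simp only [Set.mem_iUnion, Set.mem_inter_iff, Metric.mem_closedBall]
          constructor
          · intro hx
            obtain ⟨m, hm⟩ := exists_nat_ge (dist x c)
            exact ⟨m, hx, hm⟩
          · rintro ⟨m, hm, -⟩
            exact hm
        have hdir : Directed (· ⊆ ·) (fun m : ℕ => s ∩ Metric.closedBall c m) := by
          refine Monotone.directed_le ?_
          intro m₁ m₂ hm
          exact Set.inter_subset_inter_right _
            (Metric.closedBall_subset_closedBall (by exact_mod_cast hm))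
        have hsup : μ s = ⨆ m : ℕ, g m := by
          conv_lhs => rw [hU]
          exact hdir.measure_iUnion
        have hLs : L < μ s := by
          refine lt_of_le_of_lt ?_ hμs
          rw [hL]
          exact mul_le_mul_right (half_pow_antitone (by omega)) _
        rw [hsup] at hLs
        obtain ⟨m, hm⟩ := lt_iSup_iff.1 hLs
        exact ⟨m, hm.le⟩
      have hAbdd : BddBelow A := by
        refine ⟨0, fun r hr => ?_⟩
        by_contra hneg
        push_neg at hneg
        have hball : Metric.closedBall c r = ∅ := Metric.closedBall_eq_empty.2 hneg
        have hg0 : g r = 0 := by rw [hg]; simp [hball]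
        rw [hA] at hr
        simp only [Set.mem_setOf_eq, hg0] at hr
        exact hL0 (le_antisymm hr (zero_le))
      set r₀ : ℝ := sInf A with hr₀
      have hg₀ : L ≤ g r₀ := by
        have hIcap : s ∩ Metric.closedBall c r₀
            = ⋂ m : ℕ, (s ∩ Metric.closedBall c (r₀ + 1/(m+1))) := by
          ext x
          simp only [Set.mem_iInter, Set.mem_inter_iff, Metric.mem_closedBall]
          constructor
          · rintro ⟨hx, hdist⟩
            refine fun m => ⟨hx, le_trans hdist (le_add_of_nonneg_right (by positivity))⟩
          · intro hx
            refine ⟨(hx 0).1, ?_⟩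
            by_contra hgt
            push_neg at hgt
            obtain ⟨m, hm⟩ := exists_nat_one_div_lt (show (0:ℝ) < dist x c - r₀ by linarith)
            have h2 := (hx m).2
            linarith
        have hanti : Antitone (fun m : ℕ => s ∩ Metric.closedBall c (r₀ + 1/(m+1))) := by
          intro m₁ m₂ hm
          refine Set.inter_subset_inter_right _ (Metric.closedBall_subset_closedBall ?_)
          have h1 : (1:ℝ)/(m₂+1) ≤ 1/(m₁+1) := by
            apply one_div_le_one_div_of_le
            · positivity
            · exact_mod_cast add_le_add_left (Nat.cast_le.2 hm) 1
          linarith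
        have hinf : μ (s ∩ Metric.closedBall c r₀) = ⨅ m : ℕ, g (r₀ + 1/(m+1)) := by
          rw [hIcap]
          exact Directed.measure_iInter
            (fun m => (hs.inter measurableSet_closedBall).nullMeasurableSet)
            hanti.directed_ge ⟨0, measure_ne_top μ _⟩
        show L ≤ μ (s ∩ Metric.closedBall c r₀)
        rw [hinf]
        refine le_iInf fun m => ?_
        have hlt : r₀ < r₀ + 1/(m+1) := lt_add_of_pos_right _ (by positivity)
        obtain ⟨b, hbA, hblt⟩ := (csInf_lt_iff hAbdd hAne).1 hlt
        exact le_trans hbA (hgmono hblt.le)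
      have hopen : μ (s ∩ Metric.ball c r₀) ≤ L := by
        rcases le_or_gt r₀ 0 with hr | hr
        · have hball : Metric.ball c r₀ = ∅ := Metric.ball_eq_empty.2 hr
          rw [hball]
          simp
        · have hUb : s ∩ Metric.ball c r₀
              = ⋃ m : ℕ, (s ∩ Metric.closedBall c (r₀ - 1/(m+1))) := by
            ext x
            simp only [Set.mem_iUnion, Set.mem_inter_iff, Metric.mem_ball,
              Metric.mem_closedBall]
            constructor
            · rintro ⟨hx, hdist⟩
              obtain ⟨m, hm⟩ := exists_nat_one_div_lt (show (0:ℝ) < r₀ - dist x c by linarith)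
              exact ⟨m, hx, by linarith⟩
            · rintro ⟨m, hx, hdist⟩
              have hp : (0:ℝ) < 1/(m+1) := by positivity
              exact ⟨hx, by linarith⟩
          have hdir : Directed (· ⊆ ·)
              (fun m : ℕ => s ∩ Metric.closedBall c (r₀ - 1/(m+1))) := by
            refine Monotone.directed_le ?_
            intro m₁ m₂ hm
            refine Set.inter_subset_inter_right _ (Metric.closedBall_subset_closedBall ?_)
            have h1 : (1:ℝ)/(m₂+1) ≤ 1/(m₁+1) := by
              apply one_div_le_one_div_of_le
              · positivity
              · exact_mod_cast add_le_add_left (Nat.cast_le.2 hm) 1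
            linarith
          rw [hUb, hdir.measure_iUnion]
          refine iSup_le fun m => ?_
          have hnotA : (r₀ - 1/(m+1)) ∉ A := by
            refine notMem_of_lt_csInf ?_ hAbdd
            have hp : (0:ℝ) < 1/(m+1) := by positivity
            rw [← hr₀]
            linarith
          rw [hA] at hnotA
          simp only [Set.mem_setOf_eq, not_le] at hnotA
          exact hnotA.le
      rcases le_or_gt (μ (s ∩ Metric.closedBall c r₀)) ε with hcase | hcase
      · refine ⟨s ∩ Metric.closedBall c r₀, Set.inter_subset_left,
          hs.inter measurableSet_closedBall, ?_, hcase⟩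
        refine le_trans ?_ hg₀
        rw [hL]
        exact mul_le_mul_right (half_pow_antitone (by omega)) _
      · set s' : Set (Euc d) := s ∩ Metric.sphere c r₀ with hs'
        have hmeas' : MeasurableSet s' := hs.inter Metric.isClosed_sphere.measurableSet
        have hsplitU : (s ∩ Metric.ball c r₀) ∪ s' = s ∩ Metric.closedBall c r₀ := by
          rw [hs', ← Set.inter_union_distrib_left, Metric.ball_union_sphere]
        have hdisjb : Disjoint (s ∩ Metric.ball c r₀) s' := by
          refine Set.disjoint_left.2 ?_
          rintro x ⟨-, hx1⟩ ⟨-, hx2⟩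
          rw [Metric.mem_ball] at hx1
          rw [Metric.mem_sphere] at hx2
          exact absurd hx2 (ne_of_lt hx1)
        have hadd : μ (s ∩ Metric.ball c r₀) + μ s' = μ (s ∩ Metric.closedBall c r₀) := by
          rw [← measure_union hdisjb hmeas', hsplitU]
        have hμs' : ε * 2⁻¹ ^ (j+1) < μ s' := by
          by_contra hle
          push_neg at hle
          have h2 : μ (s ∩ Metric.closedBall c r₀) ≤ L + L := by
            rw [← hadd]
            exact add_le_add hopen (by rw [hL]; exact hle)
          rw [hL, ← mul_add, half_pow_add_self j] at h2
          have h3 : ε * 2⁻¹ ^ j ≤ ε := by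
            calc ε * 2⁻¹ ^ j ≤ ε * 2⁻¹ ^ 0 := mul_le_mul_right (half_pow_antitone (by omega)) _
              _ = ε := by simp
          exact absurd (lt_of_le_of_lt (h2.trans h3) hcase) (lt_irrefl _)
        have hsph' : ∀ i : Fin (d+1), (i:ℕ) < j+1 →
            ∃ R : ℝ, ∀ x ∈ s', dist x (cen d i) = R := by
          intro i hi
          rcases Nat.lt_or_ge (i : ℕ) j with h | h
          · obtain ⟨R, hR⟩ := hsph i h
            exact ⟨R, fun x hx => hR x hx.1⟩
          · have hij : (i:ℕ) = j := by omega
            refine ⟨r₀, fun x hx => ?_⟩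
            have hieq : i = (⟨j, by omega⟩ : Fin (d+1)) := Fin.ext hij
            rw [hieq, ← hc]
            exact hx.2
        obtain ⟨t, hts', htm, hlo, hhi⟩ := ih (j+1) (by omega) s' hmeas' hsph' hμs'
        exact ⟨t, hts'.trans Set.inter_subset_left, htm, hlo, hhi⟩

set_option maxHeartbeats 1000000 in
/-- partition of the whole space into countably many measurable pieces of small measure -/
lemma exists_partition (μ : Measure (Euc d)) [IsFiniteMeasure μ] [NullSingletonClass μ]
    {ε : ℝ≥0∞} (hε0 : ε ≠ 0) (hεt : ε ≠ ∞) :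
    ∃ E : ℕ → Set (Euc d), (∀ i, MeasurableSet (E i)) ∧
      (Set.univ : Set (Euc d)) ⊆ ⋃ i, E i ∧
      (∀ i, μ (E i) ≤ ε) ∧ ∑' i, μ (E i) ≤ μ Set.univ := by
  set β : ℝ≥0∞ := ε * 2⁻¹ ^ (d+2) with hβ
  have hβ0 : β ≠ 0 := mul_ne_zero hε0 (pow_ne_zero _ (by norm_num))
  have hβt : β ≠ ∞ := ENNReal.mul_ne_top hεt (ENNReal.pow_ne_top (by norm_num))
  have main : ∀ (N : ℕ) (s : Set (Euc d)), MeasurableSet s → μ s ≤ N * β + ε →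
      ∃ E : ℕ → Set (Euc d), (∀ i, MeasurableSet (E i)) ∧ s ⊆ ⋃ i, E i ∧
        (∀ i, μ (E i) ≤ ε) ∧ ∑' i, μ (E i) ≤ μ s := by
    intro N
    induction N with
    | zero =>
        intro s hs hμ
        have hμ' : μ s ≤ ε := by simpa using hμ
        refine ⟨fun i => if i = 0 then s else ∅, ?_, ?_, ?_, ?_⟩
        · intro i; by_cases h : i = 0 <;> simp [h, hs]
        · intro x hx; exact Set.mem_iUnion.2 ⟨0, by simpa using hx⟩
        · intro i
          by_cases h : i = 0
          · simpa [h] using hμ'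
          · simp [h]
        · rw [tsum_eq_single 0 (fun i hi => by simp [hi])]
          simp
    | succ N ihN =>
        intro s hs hμ
        rcases le_or_gt (μ s) ε with hle | hgt
        · refine ⟨fun i => if i = 0 then s else ∅, ?_, ?_, ?_, ?_⟩
          · intro i; by_cases h : i = 0 <;> simp [h, hs]
          · intro x hx; exact Set.mem_iUnion.2 ⟨0, by simpa using hx⟩
          · intro i
            by_cases h : i = 0
            · simpa [h] using hle
            · simp [h]
          · rw [tsum_eq_single 0 (fun i hi => by simp [hi])]
            simp
        · have hsph : ∀ i : Fin (d+1), (i:ℕ) < 0 →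
              ∃ R : ℝ, ∀ x ∈ s, dist x (cen d i) = R := fun i hi => absurd hi (by omega)
          have hgt' : ε * 2⁻¹ ^ 0 < μ s := by simpa using hgt
          obtain ⟨t, hts, htm, htlo, hthi⟩ :=
            exists_piece μ hε0 hεt (d+1) 0 (by omega) s hs hsph hgt'
          set s₂ := s \ t with hs₂def
          have hs₂m : MeasurableSet s₂ := hs.diff htm
          have hμt : μ t ≠ ∞ := ne_top_of_le_ne_top hεt hthi
          have hμs₂ : μ s₂ = μ s - μ t := measure_diff hts htm.nullMeasurableSet hμt
          have hμs₂le : μ s₂ ≤ N * β + ε := by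
            rw [hμs₂, tsub_le_iff_right]
            calc μ s ≤ (↑(N+1) : ℝ≥0∞) * β + ε := hμ
              _ = ↑N * β + ε + β := by push_cast; ring
              _ ≤ N * β + ε + μ t := add_le_add_right htlo _
          obtain ⟨E, hEm, hEcov, hElt, hEsum⟩ := ihN s₂ hs₂m hμs₂le
          refine ⟨fun i => if i = 0 then t else E (i-1), ?_, ?_, ?_, ?_⟩
          · intro i; by_cases h : i = 0 <;> simp [h, htm, hEm _]
          · intro x hx
            by_cases hxt : x ∈ t
            · exact Set.mem_iUnion.2 ⟨0, by simpa using hxt⟩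
            · have hx2 : x ∈ s₂ := ⟨hx, hxt⟩
              obtain ⟨i, hi⟩ := Set.mem_iUnion.1 (hEcov hx2)
              exact Set.mem_iUnion.2 ⟨i+1, by simpa using hi⟩
          · intro i
            by_cases h : i = 0
            · simpa [h] using hthi
            · simpa [h] using hElt (i-1)
          · have htsum : ∑' i, μ (if i = 0 then t else E (i-1))
                = μ t + ∑' i, μ (E i) := by
              rw [tsum_eq_zero_add' (f := fun i => μ (if i = 0 then t else E (i-1)))
                ENNReal.summable]
              simp
            rw [htsum]
            calc μ t + ∑' i, μ (E i) ≤ μ t + μ s₂ := add_le_add_right hEsum _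
              _ = μ t + (μ s - μ t) := by rw [hμs₂]
              _ = μ s := add_tsub_cancel_of_le (measure_mono hts)
  have hμuniv : μ Set.univ ≠ ∞ := measure_ne_top μ _
  obtain ⟨N, hN⟩ : ∃ N : ℕ, μ Set.univ ≤ N * β := by
    obtain ⟨N, hN⟩ := ENNReal.exists_nat_gt (ENNReal.div_lt_top hμuniv hβ0).ne
    refine ⟨N, ?_⟩
    have h2 := (ENNReal.div_le_iff_le_mul (Or.inl hβ0) (Or.inl hβt)).1 hN.le
    simpa [mul_comm] using h2
  exact main N Set.univ MeasurableSet.univ (le_trans hN le_self_add)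

end NHaux

namespace NHaux

lemma rpow_le_mul_of_le {x ε : ℝ≥0∞} {p : ℝ} (hp : 1 ≤ p) (hx : x ≤ ε) (hεt : ε ≠ ∞) :
    x ^ p ≤ ε ^ (p-1) * x := by
  have hp0 : 0 < p := lt_of_lt_of_le zero_lt_one hp
  rcases eq_or_ne x 0 with h0 | h0
  · rw [h0, ENNReal.zero_rpow_of_pos hp0, mul_zero]
  · have hxt : x ≠ ∞ := ne_top_of_le_ne_top hεt hx
    calc x ^ p = x ^ (p - 1 + 1) := by ring_nf
      _ = x ^ (p-1) * x ^ (1:ℝ) := ENNReal.rpow_add _ _ h0 hxt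
      _ ≤ ε ^ (p-1) * x := by
          rw [ENNReal.rpow_one]
          exact mul_le_mul_left (ENNReal.rpow_le_rpow hx (by linarith)) _

end NHaux

/-- For `1 ≤ q₁ < q₂ < ∞`: if `S ⊆ ℝ^d` satisfies `𝓗_{α,q₁}(S) < ∞`,
then `𝓗_{α,q₂}(S) = 0`. -/
theorem stmt5 (d : ℕ) (α q₁ q₂ : ℝ) (hα : 0 < α) (hq₁ : 1 ≤ q₁) (h12 : q₁ < q₂)
    (S : Set (Euc d)) (hS : NHfin d α q₁ S < ⊤) :
    NHfin d α q₂ S = 0 := by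
  have hq₁0 : 0 < q₁ := lt_of_lt_of_le zero_lt_one hq₁
  have hq₂1 : 1 ≤ q₂ := le_of_lt (lt_of_le_of_lt hq₁ h12)
  set p : ℝ := q₂ / q₁ with hp
  have hp1 : 1 < p := (one_lt_div hq₁0).2 h12
  set μ : Measure (Euc d) := NHaux.NHmeas d α q₁ hq₁ S with hμ
  have huniv : μ Set.univ = NHfin d α q₁ S := by
    rw [hμ, NHaux.NHmeas_apply hq₁ S MeasurableSet.univ, Set.univ_inter]
  haveI hfin : IsFiniteMeasure μ := by
    constructor
    rw [huniv]
    exact hS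
  haveI : NullSingletonClass μ := by
    constructor
    intro x
    rw [hμ, NHaux.NHmeas_apply hq₁ S (measurableSet_singleton x)]
    refine le_antisymm ?_ (zero_le)
    refine le_trans (NHaux.NHfin_mono Set.inter_subset_left) ?_
    rw [NHaux.NHfin_subsingleton hq₁0 Set.subsingleton_singleton]
  have main : ∀ ε : ℝ≥0∞, ε ≠ 0 → ε ≠ ∞ →
      NHfin d α q₂ S ≤ ε ^ (p - 1) * NHfin d α q₁ S := by
    intro ε hε0 hεt
    obtain ⟨E, hEm, hEcov, hEle, hEsum⟩ := NHaux.exists_partition μ hε0 hεt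
    have hSsub : S ⊆ ⋃ i, S ∩ E i := by
      intro x hx
      obtain ⟨i, hi⟩ := Set.mem_iUnion.1 (hEcov (Set.mem_univ x))
      exact Set.mem_iUnion.2 ⟨i, hx, hi⟩
    have hμE : ∀ i, NHfin d α q₁ (S ∩ E i) = μ (E i) := by
      intro i
      rw [hμ, NHaux.NHmeas_apply hq₁ S (hEm i), Set.inter_comm]
    calc NHfin d α q₂ S ≤ NHfin d α q₂ (⋃ i, S ∩ E i) := NHaux.NHfin_mono hSsub
      _ ≤ ∑' i, NHfin d α q₂ (S ∩ E i) := NHaux.NHfin_iUnion_le hq₂1 _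
      _ ≤ ∑' i, (NHfin d α q₁ (S ∩ E i)) ^ p := by
          refine ENNReal.tsum_le_tsum fun i => ?_
          exact NHaux.NHfin_le_rpow_NHfin hq₁0 h12.le
      _ ≤ ∑' i, ε ^ (p-1) * NHfin d α q₁ (S ∩ E i) := by
          refine ENNReal.tsum_le_tsum fun i => ?_
          refine NHaux.rpow_le_mul_of_le hp1.le ?_ hεt
          rw [hμE i]
          exact hEle i
      _ = ε ^ (p-1) * ∑' i, NHfin d α q₁ (S ∩ E i) := ENNReal.tsum_mul_left
      _ ≤ ε ^ (p-1) * NHfin d α q₁ S := by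
          refine mul_le_mul_right ?_ _
          calc ∑' i, NHfin d α q₁ (S ∩ E i) = ∑' i, μ (E i) := tsum_congr hμE
            _ ≤ μ Set.univ := hEsum
            _ = NHfin d α q₁ S := huniv
  have hMfin : NHfin d α q₁ S ≠ ∞ := hS.ne
  have h0 : Filter.Tendsto (fun m : ℕ => (2⁻¹ : ℝ≥0∞) ^ m) Filter.atTop (nhds 0) :=
    ENNReal.tendsto_pow_atTop_nhds_zero_of_lt_one (ENNReal.inv_lt_one.2 one_lt_two)
  have h1 : Filter.Tendsto (fun m : ℕ => ((2⁻¹:ℝ≥0∞) ^ m) ^ (p-1)) Filter.atTop (nhds 0) := by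
    have h2 := (ENNReal.continuous_rpow_const (y := p-1)).continuousAt.tendsto.comp h0
    simpa [Function.comp_def, ENNReal.zero_rpow_of_pos (by linarith : (0:ℝ) < p-1)] using h2
  have htend : Filter.Tendsto (fun m : ℕ => ((2⁻¹:ℝ≥0∞) ^ m) ^ (p-1) * NHfin d α q₁ S)
      Filter.atTop (nhds 0) := by
    have h3 := ENNReal.Tendsto.mul_const h1 (Or.inr hMfin)
    simpa using h3
  have hle : ∀ m : ℕ, NHfin d α q₂ S ≤ ((2⁻¹:ℝ≥0∞) ^ m) ^ (p-1) * NHfin d α q₁ S :=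
    fun m => main _ (pow_ne_zero _ (by norm_num)) (ENNReal.pow_ne_top (by norm_num))
  exact le_antisymm (ge_of_tendsto' htend hle) (zero_le)
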